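/- For all integers k ≥ 1 and n ≥ 1 with k not dividing n, there exists a bijection φ : S_{n-1} × {1,…,n} → S_n such that for every permutation π ∈ S_{n-1} and every x ∈ {1,…,n}, the number of k-cycles in the cycle decomposition of φ(π, x) equals the number of k-cycles in the cycle decomposition of π. -/

import Mathlib

/-!
Let `N(n, m)` be the number of permutations of `Fin n` with exactly `m` cycles of length `k`, and
`C(n)` the number of `k`-cycles among them. Since the fibres of `(π, x) ↦ #k-cycles of π` have sizes
`n · N(n - 1, m)`, it suffices to show `N(n, m) = n · N(n - 1, m)` when `k ∤ n`.
Double counting permutations with a marked `k`-cycle gives `(m + 1) N(n, m + 1) = C(n) N(n - k, m)`,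
and double counting `k`-cycles with a marked fixed point gives `C(n) (n - k) = n C(n - 1)`.
As `k ∤ n - k`, strong induction on `n` gives the identity for `m ≥ 1`; the case `m = 0` follows
because both sides sum to `n!` over `m`.
-/

open Finset

theorem Fintype.card_subtype_notMem {α : Type*} [Fintype α] [DecidableEq α] (s : Finset α) :
    Fintype.card {a // a ∉ s} = Fintype.card α - #s := by
  rw [Fintype.card_subtype_compl, Fintype.card_coe]

theorem Fintype.exists_equiv_comp_eq_of_card_filter_eq {α β γ : Type*} [Fintype α] [Fintype β]
    [DecidableEq γ] {f : α → γ} {g : β → γ} (h : ∀ c, #{a | f a = c} = #{b | g b = c}) :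
    ∃ e : α ≃ β, ∀ a, g (e a) = f a := by
  have e : ∀ c, {a // f a = c} ≃ {b // g b = c} := fun c =>
    Fintype.equivOfCardEq (by simpa only [Fintype.card_subtype] using h c)
  exact ⟨Equiv.ofFiberEquiv e, Equiv.ofFiberEquiv_map e⟩

namespace Equiv.Perm

variable {α β : Type*} [Fintype α] [DecidableEq α] [Fintype β] [DecidableEq β]

theorem cycleType_permCongr (e : α ≃ β) (σ : Perm α) :
    (e.permCongr σ).cycleType = σ.cycleType := by
  have h : e.permCongr σ
      = σ.extendDomain (e.trans (Equiv.subtypeUnivEquiv (fun _ : β => trivial)).symm) := by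
    ext b
    rw [extendDomain_apply_subtype _ _ trivial]
    simp [Equiv.subtypeUnivEquiv]
  rw [h, cycleType_extendDomain]

theorem card_filter_cycleType_congr (e : α ≃ β) (P : Multiset ℕ → Prop) [DecidablePred P] :
    #{σ : Perm α | P σ.cycleType} = #{σ : Perm β | P σ.cycleType} :=
  card_equiv e.permCongr (by simp [cycleType_permCongr])

theorem card_filter_fixing_eq (s : Finset α) (P : Multiset ℕ → Prop) [DecidablePred P] :
    #{f : Perm α | (∀ a ∈ s, f a = a) ∧ P f.cycleType} =
      #{g : Perm {a // a ∉ s} | P g.cycleType} := by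
  symm
  refine card_bij (fun g _ => ofSubtype g) (fun g hg => ?_) (fun _ _ _ _ h => ofSubtype_injective h)
    (fun f hf => ?_)
  · simp only [mem_filter, mem_univ, true_and, cycleType_ofSubtype] at hg ⊢
    exact ⟨fun a ha => ofSubtype_apply_of_not_mem g (not_not.2 ha), hg⟩
  · simp only [mem_filter, mem_univ, true_and] at hf
    let f' := (Perm.subtypeEquivSubtypePerm (· ∉ s)).symm ⟨f, fun a ha => hf.1 a (not_not.1 ha)⟩
    have hf' : ofSubtype f' = f :=
      congrArg Subtype.val ((Perm.subtypeEquivSubtypePerm _).apply_symm_apply _)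
    refine ⟨f', ?_, hf'⟩
    simpa only [mem_filter, mem_univ, true_and, ← cycleType_ofSubtype, hf'] using hf.2

theorem disjoint_iff_forall_mem_support {f c : Perm α} :
    Disjoint f c ↔ ∀ a ∈ c.support, f a = a := by
  simp only [Disjoint, mem_support, ← or_iff_not_imp_right]

theorem mem_cycleFactorsFinset_mul_iff {c f : Perm α} (hc : c.IsCycle) :
    c ∈ (f * c).cycleFactorsFinset ↔ Disjoint f c := by
  refine ⟨fun h => ?_, fun hd => ?_⟩
  · simpa using disjoint_mul_inv_of_mem_cycleFactorsFinset h
  · rw [hd.cycleFactorsFinset_mul_eq_union, hc.cycleFactorsFinset_eq_singleton]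
    exact mem_union_right _ (mem_singleton_self c)

theorem count_cycleType_eq_card_filter (σ : Perm α) (k : ℕ) :
    σ.cycleType.count k = #{c ∈ σ.cycleFactorsFinset | c.cycleType = {k}} := by
  rw [cycleType_def, Multiset.count_map, card_def, filter_val]
  congr 1
  refine Multiset.filter_congr fun c hc => ?_
  rw [(mem_cycleFactorsFinset_iff.1 hc).1.cycleType, Function.comp_apply, Multiset.singleton_inj,
    eq_comm]

theorem card_filter_mem_cycleFactorsFinset {c : Perm α} (hc : c.IsCycle)
    (P : Multiset ℕ → Prop) [DecidablePred P] :
    #{σ : Perm α | c ∈ σ.cycleFactorsFinset ∧ P σ.cycleType} =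
      #{τ : Perm {a // a ∉ c.support} | P (τ.cycleType + c.cycleType)} := by
  rw [← card_filter_fixing_eq c.support (fun M => P (M + c.cycleType))]
  refine card_nbij' (· * c⁻¹) (· * c) (fun σ hσ => ?_) (fun f hf => ?_)
    (fun σ _ => inv_mul_cancel_right σ c) (fun f _ => mul_inv_cancel_right f c)
  · simp only [coe_filter, mem_univ, true_and, Set.mem_ofPred_eq] at hσ ⊢
    have hd := disjoint_mul_inv_of_mem_cycleFactorsFinset hσ.1
    rw [← disjoint_iff_forall_mem_support, ← hd.cycleType_mul, inv_mul_cancel_right]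
    exact ⟨hd, hσ.2⟩
  · simp only [coe_filter, mem_univ, true_and, Set.mem_ofPred_eq, ← disjoint_iff_forall_mem_support]
      at hf ⊢
    rw [mem_cycleFactorsFinset_mul_iff hc, hf.1.cycleType_mul]
    exact hf

theorem isCycle_of_cycleType_eq_singleton {σ : Perm α} {k : ℕ} (h : σ.cycleType = {k}) :
    σ.IsCycle :=
  card_cycleType_eq_one.1 (by rw [h, Multiset.card_singleton])

theorem card_support_of_cycleType_eq_singleton {σ : Perm α} {k : ℕ} (h : σ.cycleType = {k}) :
    #σ.support = k := by
  rw [← sum_cycleType, h, Multiset.sum_singleton]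

theorem count_cycleType_le_card (σ : Perm α) (k : ℕ) :
    σ.cycleType.count k ≤ Fintype.card α :=
  calc σ.cycleType.count k ≤ Multiset.card σ.cycleType := Multiset.count_le_card _ _
    _ ≤ σ.cycleType.sum := by
      simpa using Multiset.card_nsmul_le_sum fun _ hx => (one_lt_of_mem_cycleType hx).le
    _ ≤ Fintype.card α := sum_cycleType_le σ

theorem card_filter_cycleType_eq_fin {n : ℕ} (h : Fintype.card α = n)
    (P : Multiset ℕ → Prop) [DecidablePred P] :
    #{σ : Perm α | P σ.cycleType} = #{σ : Perm (Fin n) | P σ.cycleType} :=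
  card_filter_cycleType_congr (Fintype.equivFinOfCardEq h) P

def numPermsWithCount (k n m : ℕ) : ℕ := #{σ : Perm (Fin n) | σ.cycleType.count k = m}

def numCyclesOfLength (k n : ℕ) : ℕ := #{c : Perm (Fin n) | c.cycleType = {k}}

theorem numCyclesOfLength_mul_sub (k n : ℕ) :
    numCyclesOfLength k n * (n - k) = n * numCyclesOfLength k (n - 1) := by
  have h := card_mul_eq_card_mul (fun (c : Perm (Fin n)) (a : Fin n) => a ∉ c.support)
    (s := {c | c.cycleType = {k}}) (t := univ) (m := n - k) (n := numCyclesOfLength k (n - 1))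
    (fun c hc => ?_) (fun a _ => ?_)
  · rwa [card_univ, Fintype.card_fin] at h
  · rw [mem_filter] at hc
    rw [bipartiteAbove, filter_not, filter_mem_eq_inter, univ_inter, ← compl_eq_univ_sdiff,
      card_compl, Fintype.card_fin, card_support_of_cycleType_eq_singleton hc.2]
  · have hcard : Fintype.card {b // b ∉ ({a} : Finset (Fin n))} = n - 1 := by
      rw [Fintype.card_subtype_notMem, Fintype.card_fin, card_singleton]
    rw [numCyclesOfLength, ← card_filter_cycleType_eq_fin hcard (· = {k}),
      ← card_filter_fixing_eq {a} (· = {k}), bipartiteBelow, filter_filter]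
    simp only [mem_singleton, forall_eq, notMem_support, and_comm]

theorem numPermsWithCount_succ_mul (k n m : ℕ) :
    numPermsWithCount k n (m + 1) * (m + 1) =
      numCyclesOfLength k n * numPermsWithCount k (n - k) m := by
  refine card_mul_eq_card_mul (fun (σ c : Perm (Fin n)) => c ∈ σ.cycleFactorsFinset)
    (fun σ hσ => ?_) (fun c hc => ?_)
  · rw [mem_filter] at hσ
    rw [← hσ.2, count_cycleType_eq_card_filter, bipartiteAbove, filter_comm, filter_mem_eq_inter,
      univ_inter]
  · rw [mem_filter] at hc
    have hcard : Fintype.card {a // a ∉ c.support} = n - k := by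
      rw [Fintype.card_subtype_notMem, Fintype.card_fin, card_support_of_cycleType_eq_singleton hc.2]
    rw [numPermsWithCount, ← card_filter_cycleType_eq_fin hcard (·.count k = m), bipartiteBelow,
      filter_comm, filter_filter, card_filter_mem_cycleFactorsFinset
        (isCycle_of_cycleType_eq_singleton hc.2) (·.count k = m + 1), hc.2]
    simp only [Multiset.count_add, Multiset.count_singleton_self, add_left_inj]

theorem two_le_and_le_of_numCyclesOfLength_ne_zero {k n : ℕ} (h : numCyclesOfLength k n ≠ 0) :
    2 ≤ k ∧ k ≤ n := by
  obtain ⟨c, hc⟩ := card_ne_zero.1 h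
  rw [mem_filter] at hc
  have hk := sum_cycleType_le c
  rw [hc.2, Multiset.sum_singleton, Fintype.card_fin] at hk
  exact ⟨two_le_of_mem_cycleType (hc.2 ▸ Multiset.mem_singleton_self k), hk⟩

theorem sum_numPermsWithCount {k n B : ℕ} (hB : n ≤ B) :
    ∑ m ∈ range (B + 1), numPermsWithCount k n m = n.factorial := by
  have hmaps : ((univ : Finset (Perm (Fin n))) : Set _).MapsTo
      (fun σ : Perm (Fin n) => σ.cycleType.count k) (range (B + 1)) := fun σ _ =>
    mem_range_succ_iff.2 ((count_cycleType_le_card σ k).trans ((Fintype.card_fin n).trans_le hB))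
  calc _ = #(univ : Finset (Perm (Fin n))) := (card_eq_sum_card_fiberwise hmaps).symm
    _ = n.factorial := by rw [card_univ, Fintype.card_perm, Fintype.card_fin]

theorem numPermsWithCount_zero_eq_mul {k n : ℕ} (hn : 1 ≤ n)
    (h : ∀ m, numPermsWithCount k n (m + 1) = n * numPermsWithCount k (n - 1) (m + 1)) :
    numPermsWithCount k n 0 = n * numPermsWithCount k (n - 1) 0 := by
  have hsum := sum_numPermsWithCount (k := k) (le_refl n)
  have hsum' := sum_numPermsWithCount (k := k) (Nat.sub_le n 1)
  rw [sum_range_succ'] at hsum hsum'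
  simp_rw [h, ← mul_sum] at hsum
  rw [← Nat.mul_factorial_pred (by omega), ← hsum', mul_add] at hsum
  omega

theorem numPermsWithCount_eq_mul {k n : ℕ} (hkn : ¬ k ∣ n) (m : ℕ) :
    numPermsWithCount k n m = n * numPermsWithCount k (n - 1) m := by
  induction n using Nat.strong_induction_on generalizing m with
  | _ n ih =>
    have hn : 1 ≤ n := Nat.one_le_iff_ne_zero.2 fun h => hkn (h ▸ dvd_zero k)
    have hsucc : ∀ m, numPermsWithCount k n (m + 1) = n * numPermsWithCount k (n - 1) (m + 1) := by
      intro m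
      refine Nat.eq_of_mul_eq_mul_right m.succ_pos ?_
      rw [mul_assoc, numPermsWithCount_succ_mul, numPermsWithCount_succ_mul]
      by_cases h0 : numCyclesOfLength k n = 0
      · have h0' : numCyclesOfLength k (n - 1) = 0 := by
          have := numCyclesOfLength_mul_sub k n
          rw [h0, zero_mul, eq_comm, mul_eq_zero] at this
          omega
        rw [h0, h0', zero_mul, zero_mul, mul_zero]
      · obtain ⟨hk, hkle⟩ := two_le_and_le_of_numCyclesOfLength_ne_zero h0
        have hk_sub : ¬ k ∣ n - k := fun h => hkn (by simpa [hkle] using Nat.dvd_add h dvd_rfl)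
        rw [ih (n - k) (by omega) hk_sub, Nat.sub_right_comm, ← mul_assoc,
          numCyclesOfLength_mul_sub, mul_assoc]
    cases m with
    | zero => exact numPermsWithCount_zero_eq_mul hn hsucc
    | succ m => exact hsucc m

end Equiv.Perm

theorem stmt16_general (k n : ℕ) (hkn : ¬ k ∣ n) :
    ∃ φ : Equiv.Perm (Fin (n - 1)) × Fin n ≃ Equiv.Perm (Fin n),
      ∀ (π : Equiv.Perm (Fin (n - 1))) (x : Fin n),
        (φ (π, x)).cycleType.count k = π.cycleType.count k := by
  obtain ⟨φ, hφ⟩ := Fintype.exists_equiv_comp_eq_of_card_filter_eq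
    (f := fun p : Equiv.Perm (Fin (n - 1)) × Fin n => p.1.cycleType.count k)
    (g := fun σ : Equiv.Perm (Fin n) => σ.cycleType.count k) fun m => by
      rw [← univ_product_univ,
        filter_product_left fun π : Equiv.Perm (Fin (n - 1)) => π.cycleType.count k = m,
        card_product, card_univ, Fintype.card_fin, mul_comm]
      exact (Equiv.Perm.numPermsWithCount_eq_mul hkn m).symm
  exact ⟨φ, fun π x => hφ (π, x)⟩

theorem stmt16 (k n : ℕ) (hk : 1 ≤ k) (hn : 1 ≤ n) (hkn : ¬ k ∣ n) :
    ∃ φ : Equiv.Perm (Fin (n - 1)) × Fin n ≃ Equiv.Perm (Fin n),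
      ∀ (π : Equiv.Perm (Fin (n - 1))) (x : Fin n),
        (φ (π, x)).cycleType.count k = π.cycleType.count k :=
  stmt16_general k n hkn
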